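/- arXiv:2506.09793 — 3 statements merged into one kernel-verified Lean document; each statement's English description precedes it below -/
import Mathlib

section
/- For any permutation π of {1,...,n} and any four distinct facilities i, j, k, h, the number of pairs among {(i,j),(i,k),(j,k)} between which h lies is never exactly 1; combined with being at most 2, it is 0 or 2. -/
/-- Facility `a` lies strictly between facilities `b` and `c` in the arrangement `π`. -/
def betw {n : ℕ} (π : Equiv.Perm (Fin n)) (b a c : Fin n) : Prop :=
  (π.symm b < π.symm a ∧ π.symm a < π.symm c) ∨
  (π.symm c < π.symm a ∧ π.symm a < π.symm b)

open Classical in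
/-- For any permutation `π` and any four distinct facilities `i, j, k, h`, the number of
pairs among `(i,j), (i,k), (j,k)` between which `h` lies is never exactly `1`; combined
with being at most `2`, it is `0` or `2`. -/
theorem stmt4 (n : ℕ) (π : Equiv.Perm (Fin n)) (i j k h : Fin n)
    (hij : i ≠ j) (hik : i ≠ k) (hih : i ≠ h) (hjk : j ≠ k) (hjh : j ≠ h) (hkh : k ≠ h) :
    ((if betw π i h j then (1 : ℕ) else 0) + (if betw π i h k then 1 else 0) +
        (if betw π j h k then 1 else 0)) ≠ 1 ∧
      ((if betw π i h j then (1 : ℕ) else 0) + (if betw π i h k then 1 else 0) +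
          (if betw π j h k then 1 else 0) = 0 ∨
        (if betw π i h j then (1 : ℕ) else 0) + (if betw π i h k then 1 else 0) +
          (if betw π j h k then 1 else 0) = 2) := by
  have hI : π.symm i ≠ π.symm j := fun e => hij (π.symm.injective e)
  have hI2 : π.symm i ≠ π.symm k := fun e => hik (π.symm.injective e)
  have hI3 : π.symm i ≠ π.symm h := fun e => hih (π.symm.injective e)
  have hJ : π.symm j ≠ π.symm k := fun e => hjk (π.symm.injective e)
  have hJ2 : π.symm j ≠ π.symm h := fun e => hjh (π.symm.injective e)
  have hK : π.symm k ≠ π.symm h := fun e => hkh (π.symm.injective e)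
  simp only [betw, Fin.lt_def, ← Fin.val_ne_iff] at *
  split_ifs <;> omega
end

section
/- (Window independence) Let π and π' be permutations of {1,...,n} that agree on all positions outside the window [sw,ew] and such that π' restricted to positions in [sw,ew] is a rearrangement of the same set of facilities as π on those positions. Then fixed(sw,ew,π) = fixed(sw,ew,π'), i.e., the fixed part of the window-decomposed SRFLP objective does not depend on the arrangement of facilities inside the window. -/
open Finset

/-- The window-independent part `fixed(sw,ew,π)` of the SRFLP objective for the
window of positions `[sw,ew]` (1-indexed positions `1..n`): terms (a)–(e). -/
noncomputable def fixedPart (n sw ew : ℕ) (ℓ : ℕ → ℝ) (w : ℕ → ℕ → ℝ) (π : ℕ → ℕ) : ℝ :=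
  (∑ i ∈ Icc 1 (sw - 2), ∑ j ∈ Icc (i + 1) (sw - 1),
      w (π i) (π j) * ((ℓ (π i) + ℓ (π j)) / 2 + ∑ k ∈ Ioo i j, ℓ (π k)))
  + (∑ i ∈ Icc 1 (sw - 1), ∑ j ∈ Icc sw ew,
      w (π i) (π j) * (ℓ (π i) / 2 + ∑ k ∈ Icc (i + 1) (sw - 1), ℓ (π k)))
  + (∑ i ∈ Icc 1 (sw - 1), ∑ j ∈ Icc (ew + 1) n,
      w (π i) (π j) * ((ℓ (π i) + ℓ (π j)) / 2 + (∑ k ∈ Icc (i + 1) (sw - 1), ℓ (π k))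
        + (∑ k ∈ Icc sw ew, ℓ (π k)) + ∑ k ∈ Icc (ew + 1) (j - 1), ℓ (π k)))
  + (∑ i ∈ Icc sw ew, ∑ j ∈ Icc (ew + 1) n,
      w (π j) (π i) * (ℓ (π j) / 2 + ∑ k ∈ Icc (ew + 1) (j - 1), ℓ (π k)))
  + (∑ i ∈ Icc (ew + 1) n, ∑ j ∈ Icc (i + 1) n,
      w (π i) (π j) * ((ℓ (π i) + ℓ (π j)) / 2 + ∑ k ∈ Ioo i j, ℓ (π k)))

/-- Window independence: if `π` and `π'` agree on all positions outside the window
`[sw,ew]` and `π'` on the window positions is a rearrangement of the same facilities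
as `π` there (witnessed by a permutation `σ` of positions fixing everything outside
the window), then `fixed(sw,ew,π) = fixed(sw,ew,π')`. -/
theorem stmt8 (n sw ew : ℕ) (ℓ : ℕ → ℝ) (w : ℕ → ℕ → ℝ) (π π' : ℕ → ℕ)
    (hℓ : ∀ f, 0 < ℓ f) (hw : ∀ a b, w a b = w b a)
    (hsw : 1 ≤ sw) (hswew : sw < ew) (hew : ew ≤ n)
    (hout : ∀ i, i ∉ Icc sw ew → π' i = π i)
    (hre : ∃ σ : Equiv.Perm ℕ, (∀ i, i ∉ Icc sw ew → σ i = i) ∧ ∀ i, π' i = π (σ i)) :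
    fixedPart n sw ew ℓ w π = fixedPart n sw ew ℓ w π' := by
  obtain ⟨σ, hfix, hπ'⟩ := hre
  have hmem : ∀ i, i ∈ Icc sw ew ↔ σ i ∈ Icc sw ew := by
    intro i
    constructor
    · intro hi
      by_contra h
      have h2 : σ (σ i) = σ i := hfix _ h
      have h3 := σ.injective h2
      rw [h3] at h
      exact h hi
    · intro hi
      by_contra h
      rw [hfix _ h] at hi
      exact h hi
  have key : ∀ g : ℕ → ℝ, ∑ k ∈ Icc sw ew, g (σ k) = ∑ k ∈ Icc sw ew, g k :=
    fun g => Finset.sum_equiv σ (fun i => hmem i) (fun i _ => rfl)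
  have hwin : (∑ k ∈ Icc sw ew, ℓ (π' k)) = ∑ k ∈ Icc sw ew, ℓ (π k) := by
    simp only [hπ']
    exact key (fun m => ℓ (π m))
  have ha : (∑ i ∈ Icc 1 (sw - 2), ∑ j ∈ Icc (i + 1) (sw - 1),
      w (π i) (π j) * ((ℓ (π i) + ℓ (π j)) / 2 + ∑ k ∈ Ioo i j, ℓ (π k)))
      = ∑ i ∈ Icc 1 (sw - 2), ∑ j ∈ Icc (i + 1) (sw - 1),
      w (π' i) (π' j) * ((ℓ (π' i) + ℓ (π' j)) / 2 + ∑ k ∈ Ioo i j, ℓ (π' k)) := by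
    refine Finset.sum_congr rfl fun i hi => Finset.sum_congr rfl fun j hj => ?_
    simp only [mem_Icc] at hi hj
    have hS : (∑ k ∈ Ioo i j, ℓ (π' k)) = ∑ k ∈ Ioo i j, ℓ (π k) := by
      refine Finset.sum_congr rfl fun k hk => ?_
      simp only [mem_Ioo] at hk
      rw [hout k (by simp only [mem_Icc]; omega)]
    rw [hout i (by simp only [mem_Icc]; omega), hout j (by simp only [mem_Icc]; omega), hS]
  have hb : (∑ i ∈ Icc 1 (sw - 1), ∑ j ∈ Icc sw ew,
      w (π i) (π j) * (ℓ (π i) / 2 + ∑ k ∈ Icc (i + 1) (sw - 1), ℓ (π k)))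
      = ∑ i ∈ Icc 1 (sw - 1), ∑ j ∈ Icc sw ew,
      w (π' i) (π' j) * (ℓ (π' i) / 2 + ∑ k ∈ Icc (i + 1) (sw - 1), ℓ (π' k)) := by
    refine Finset.sum_congr rfl fun i hi => ?_
    simp only [mem_Icc] at hi
    have hi' : π' i = π i := hout i (by simp only [mem_Icc]; omega)
    have hC : (∑ k ∈ Icc (i + 1) (sw - 1), ℓ (π' k))
        = ∑ k ∈ Icc (i + 1) (sw - 1), ℓ (π k) := by
      refine Finset.sum_congr rfl fun k hk => ?_
      simp only [mem_Icc] at hk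
      rw [hout k (by simp only [mem_Icc]; omega)]
    simp only [hi', hC]
    simp only [hπ']
    exact (key (fun m => w (π i) (π m)
      * (ℓ (π i) / 2 + ∑ k ∈ Icc (i + 1) (sw - 1), ℓ (π k)))).symm
  have hc : (∑ i ∈ Icc 1 (sw - 1), ∑ j ∈ Icc (ew + 1) n,
      w (π i) (π j) * ((ℓ (π i) + ℓ (π j)) / 2 + (∑ k ∈ Icc (i + 1) (sw - 1), ℓ (π k))
        + (∑ k ∈ Icc sw ew, ℓ (π k)) + ∑ k ∈ Icc (ew + 1) (j - 1), ℓ (π k)))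
      = ∑ i ∈ Icc 1 (sw - 1), ∑ j ∈ Icc (ew + 1) n,
      w (π' i) (π' j) * ((ℓ (π' i) + ℓ (π' j)) / 2 + (∑ k ∈ Icc (i + 1) (sw - 1), ℓ (π' k))
        + (∑ k ∈ Icc sw ew, ℓ (π' k)) + ∑ k ∈ Icc (ew + 1) (j - 1), ℓ (π' k)) := by
    refine Finset.sum_congr rfl fun i hi => Finset.sum_congr rfl fun j hj => ?_
    simp only [mem_Icc] at hi hj
    have hS1 : (∑ k ∈ Icc (i + 1) (sw - 1), ℓ (π' k))
        = ∑ k ∈ Icc (i + 1) (sw - 1), ℓ (π k) := by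
      refine Finset.sum_congr rfl fun k hk => ?_
      simp only [mem_Icc] at hk
      rw [hout k (by simp only [mem_Icc]; omega)]
    have hS3 : (∑ k ∈ Icc (ew + 1) (j - 1), ℓ (π' k))
        = ∑ k ∈ Icc (ew + 1) (j - 1), ℓ (π k) := by
      refine Finset.sum_congr rfl fun k hk => ?_
      simp only [mem_Icc] at hk
      rw [hout k (by simp only [mem_Icc]; omega)]
    rw [hout i (by simp only [mem_Icc]; omega), hout j (by simp only [mem_Icc]; omega),
      hS1, hS3, hwin]
  have hd : (∑ i ∈ Icc sw ew, ∑ j ∈ Icc (ew + 1) n,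
      w (π j) (π i) * (ℓ (π j) / 2 + ∑ k ∈ Icc (ew + 1) (j - 1), ℓ (π k)))
      = ∑ i ∈ Icc sw ew, ∑ j ∈ Icc (ew + 1) n,
      w (π' j) (π' i) * (ℓ (π' j) / 2 + ∑ k ∈ Icc (ew + 1) (j - 1), ℓ (π' k)) := by
    simp only [hπ']
    have hstep : ∀ i, (∑ j ∈ Icc (ew + 1) n,
        w (π (σ j)) (π (σ i)) * (ℓ (π (σ j)) / 2 + ∑ k ∈ Icc (ew + 1) (j - 1), ℓ (π (σ k))))
        = ∑ j ∈ Icc (ew + 1) n,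
        w (π j) (π (σ i)) * (ℓ (π j) / 2 + ∑ k ∈ Icc (ew + 1) (j - 1), ℓ (π k)) := by
      intro i
      refine Finset.sum_congr rfl fun j hj => ?_
      simp only [mem_Icc] at hj
      have hS : (∑ k ∈ Icc (ew + 1) (j - 1), ℓ (π (σ k)))
          = ∑ k ∈ Icc (ew + 1) (j - 1), ℓ (π k) := by
        refine Finset.sum_congr rfl fun k hk => ?_
        simp only [mem_Icc] at hk
        rw [hfix k (by simp only [mem_Icc]; omega)]
      rw [hfix j (by simp only [mem_Icc]; omega), hS]
    calc (∑ i ∈ Icc sw ew, ∑ j ∈ Icc (ew + 1) n,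
        w (π j) (π i) * (ℓ (π j) / 2 + ∑ k ∈ Icc (ew + 1) (j - 1), ℓ (π k)))
        = ∑ i ∈ Icc sw ew, ∑ j ∈ Icc (ew + 1) n,
          w (π j) (π (σ i)) * (ℓ (π j) / 2 + ∑ k ∈ Icc (ew + 1) (j - 1), ℓ (π k)) :=
          (key (fun m => ∑ j ∈ Icc (ew + 1) n,
            w (π j) (π m) * (ℓ (π j) / 2 + ∑ k ∈ Icc (ew + 1) (j - 1), ℓ (π k)))).symm
      _ = ∑ i ∈ Icc sw ew, ∑ j ∈ Icc (ew + 1) n,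
          w (π (σ j)) (π (σ i)) * (ℓ (π (σ j)) / 2
            + ∑ k ∈ Icc (ew + 1) (j - 1), ℓ (π (σ k))) :=
          Finset.sum_congr rfl fun i _ => (hstep i).symm
  have he : (∑ i ∈ Icc (ew + 1) n, ∑ j ∈ Icc (i + 1) n,
      w (π i) (π j) * ((ℓ (π i) + ℓ (π j)) / 2 + ∑ k ∈ Ioo i j, ℓ (π k)))
      = ∑ i ∈ Icc (ew + 1) n, ∑ j ∈ Icc (i + 1) n,
      w (π' i) (π' j) * ((ℓ (π' i) + ℓ (π' j)) / 2 + ∑ k ∈ Ioo i j, ℓ (π' k)) := by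
    refine Finset.sum_congr rfl fun i hi => Finset.sum_congr rfl fun j hj => ?_
    simp only [mem_Icc] at hi hj
    have hS : (∑ k ∈ Ioo i j, ℓ (π' k)) = ∑ k ∈ Ioo i j, ℓ (π k) := by
      refine Finset.sum_congr rfl fun k hk => ?_
      simp only [mem_Ioo] at hk
      rw [hout k (by simp only [mem_Icc]; omega)]
    rw [hout i (by simp only [mem_Icc]; omega), hout j (by simp only [mem_Icc]; omega), hS]
  unfold fixedPart
  rw [ha, hb, hc, hd, he]
end

section
/- (Correctness of order reconstruction) Let π be a linear arrangement of m distinct elements and for each pair (i,j) let b_{ij} be the number of elements lying strictly between i and j. Then (1) a pair (s,e) maximizing b_{ij} consists of the two endpoints of the arrangement (b_{se} = m − 2), and (2) for the endpoint s and any other element j, the position of j in the arrangement oriented to start at s equals b_{sj} + 2, where b_{sj} is the number of elements strictly between s and j. Hence the arrangement is determined, up to reversal, by the betweenness counts. -/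
/-- `nBetween m pos i j` is the number of elements whose position lies strictly
between the positions of `i` and `j` in the linear arrangement `pos`. -/
def nBetween (m : ℕ) (pos : Equiv.Perm (Fin m)) (i j : Fin m) : ℕ :=
  (Finset.univ.filter fun k =>
    min (pos i) (pos j) < pos k ∧ pos k < max (pos i) (pos j)).card

lemma nBetween_eq (m : ℕ) (pos : Equiv.Perm (Fin m)) (i j : Fin m) :
    nBetween m pos i j =
      max (pos i : ℕ) (pos j : ℕ) - min (pos i : ℕ) (pos j : ℕ) - 1 := by
  unfold nBetween
  have h : (Finset.univ.filter fun k =>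
      min (pos i) (pos j) < pos k ∧ pos k < max (pos i) (pos j)) =
      (Finset.Ioo (min (pos i) (pos j)) (max (pos i) (pos j))).map
        pos.symm.toEmbedding := by
    ext k
    simp [Finset.mem_map, Finset.mem_Ioo, Equiv.symm_apply_eq]
  rw [h, Finset.card_map, Fin.card_Ioo]
  rcases le_total (pos i) (pos j) with hle | hle
  · rw [min_eq_left hle, max_eq_right hle,
      min_eq_left (Fin.le_def.mp hle), max_eq_right (Fin.le_def.mp hle)]
  · rw [min_eq_right hle, max_eq_left hle,
      min_eq_right (Fin.le_def.mp hle), max_eq_left (Fin.le_def.mp hle)]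

/-- Correctness of order reconstruction for a linear arrangement of `m ≥ 2` distinct
elements (`pos` gives the 0-indexed position of each element):
(1) any pair `(s,e)` of distinct elements maximizing the betweenness count consists of
the two endpoints of the arrangement, with `b_{se} = m − 2`; and
(2) if `s` is the starting endpoint, then for every other element `j` its 1-indexed
position equals `b_{sj} + 2`. Hence the arrangement is determined, up to reversal, by
the betweenness counts. -/
theorem stmt13 (m : ℕ) (hm : 2 ≤ m) (pos : Equiv.Perm (Fin m)) :
    (∀ s e : Fin m, s ≠ e → (∀ i j : Fin m, i ≠ j → nBetween m pos i j ≤ nBetween m pos s e) →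
      nBetween m pos s e = m - 2 ∧
        (((pos s : ℕ) = 0 ∧ (pos e : ℕ) = m - 1) ∨
          ((pos e : ℕ) = 0 ∧ (pos s : ℕ) = m - 1))) ∧
    ∀ s j : Fin m, (pos s : ℕ) = 0 → j ≠ s →
      (pos j : ℕ) + 1 = nBetween m pos s j + 2 := by
  constructor
  · intro s e hse hmax
    set s0 : Fin m := pos.symm ⟨0, by omega⟩ with hs0def
    set e0 : Fin m := pos.symm ⟨m - 1, by omega⟩ with he0def
    have hs0 : (pos s0 : ℕ) = 0 := by simp [hs0def]
    have he0 : (pos e0 : ℕ) = m - 1 := by simp [he0def]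
    have hne : s0 ≠ e0 := by
      intro h
      have : (pos s0 : ℕ) = (pos e0 : ℕ) := by rw [h]
      omega
    have h1 : nBetween m pos s0 e0 = m - 2 := by
      rw [nBetween_eq, hs0, he0]; omega
    have h2 : m - 2 ≤ nBetween m pos s e := h1 ▸ hmax s0 e0 hne
    have h3 := nBetween_eq m pos s e
    have ha : (pos s : ℕ) < m := (pos s).isLt
    have hb : (pos e : ℕ) < m := (pos e).isLt
    have hab : (pos s : ℕ) ≠ (pos e : ℕ) := by
      intro h
      exact hse (pos.injective (Fin.ext h))
    rcases le_total ((pos s : ℕ)) ((pos e : ℕ)) with hle | hle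
    · rw [min_eq_left hle, max_eq_right hle] at h3
      omega
    · rw [min_eq_right hle, max_eq_left hle] at h3
      omega
  · intro s j hs hj
    have h3 := nBetween_eq m pos s j
    have hab : (pos j : ℕ) ≠ (pos s : ℕ) := by
      intro h
      exact hj (pos.injective (Fin.ext h))
    rcases le_total ((pos s : ℕ)) ((pos j : ℕ)) with hle | hle
    · rw [min_eq_left hle, max_eq_right hle] at h3
      omega
    · rw [min_eq_right hle, max_eq_left hle] at h3
      omega
end
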